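/- (Phase diagram for Bonferroni thresholding.) In the ARW model with parameters 0 < β < 1 and 0 < r < 1, consider the Bonferroni-type threshold t_p(1) = √(2 log p). If r > (1−√(1−β))² then √p · Sep(t_p(1); ε_p, τ_p) → ∞ as p → ∞, while if r < (1−√(1−β))² then √p · Sep(t_p(1); ε_p, τ_p) → 0 as p → ∞. -/

import Mathlib

open Filter Set MeasureTheory

noncomputable def gaussPDF (t : ℝ) : ℝ := (Real.sqrt (2 * Real.pi))⁻¹ * Real.exp (-(t ^ 2) / 2)

/-- standard normal CDF Φ -/
noncomputable def normCDF (t : ℝ) : ℝ := ∫ x in Set.Iic t, gaussPDF x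

/-- survival function of |N(τ,1)| -/
noncomputable def psiBar (τ t : ℝ) : ℝ := (1 - normCDF (t - τ)) + normCDF (-t - τ)

noncomputable def tprFn (ε τ t : ℝ) : ℝ := ε * psiBar τ t

noncomputable def fprFn (ε t : ℝ) : ℝ := (1 - ε) * psiBar 0 t

noncomputable def idrFn (ε τ t : ℝ) : ℝ := ε * normCDF (-t - τ)

/-- clipping proxy separation -/
noncomputable def sepFn (ε τ t : ℝ) : ℝ :=
  2 * τ * (tprFn ε τ t - 2 * idrFn ε τ t) / Real.sqrt (tprFn ε τ t + fprFn ε t)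

/-- proxy false discovery rate -/
noncomputable def fdrFn (ε τ t : ℝ) : ℝ := fprFn ε t / (tprFn ε τ t + fprFn ε t)

/-- magnitude of derivative of TPR -/
noncomputable def tprD (ε τ t : ℝ) : ℝ := ε * (gaussPDF (t - τ) + gaussPDF (t + τ))

/-- magnitude of derivative of FPR -/
noncomputable def fprD (ε t : ℝ) : ℝ := 2 * (1 - ε) * gaussPDF t

/-- proxy local false discovery rate -/
noncomputable def lfdrFn (ε τ t : ℝ) : ℝ := fprD ε t / (tprD ε τ t + fprD ε t)

noncomputable def rhoStar (β : ℝ) : ℝ :=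
  if β ≤ 1 / 2 then 0 else if β ≤ 3 / 4 then β - 1 / 2 else (1 - Real.sqrt (1 - β)) ^ 2

noncomputable def qStar (r β : ℝ) : ℝ := if r ≤ β / 3 then 4 * r else (β + r) ^ 2 / (4 * r)

/-- sparsity ε_p = p^{-β} in the ARW model -/
noncomputable def epsP (β : ℝ) (p : ℕ) : ℝ := (p : ℝ) ^ (-β)

/-- strength τ_p = √(2 r log p) in the ARW model -/
noncomputable def tauP (r : ℝ) (p : ℕ) : ℝ := Real.sqrt (2 * r * Real.log p)

/-- threshold t_p(q) = √(2 q log p) -/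
noncomputable def tP (q : ℝ) (p : ℕ) : ℝ := Real.sqrt (2 * q * Real.log p)

/-- folded two-point mixture G_{ε,τ} -/
noncomputable def gMix (ε τ t : ℝ) : ℝ :=
  (1 - ε) * (normCDF t - normCDF (-t)) + ε * (normCDF (t - τ) - normCDF (-t - τ))

/-- ideal HC objective -/
noncomputable def hcObj (ε τ t : ℝ) : ℝ :=
  ((1 - gMix ε τ t) - psiBar 0 t) / Real.sqrt (gMix ε τ t * (1 - gMix ε τ t))

/-- useful feature discovery exponent δ(q) -/
noncomputable def deltaExp (β r q : ℝ) : ℝ :=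
  if q ≤ r then 1 - β else 1 - β - (Real.sqrt q - Real.sqrt r) ^ 2

/-- separation growth exponent γ(q) -/
noncomputable def gammaExp (β r q : ℝ) : ℝ :=
  deltaExp β r q - max (1 - q) (deltaExp β r q) / 2

open Real

/-!
Write `t = √(2 log p)`, so `τ_p = √r t`, `ε_p = exp (-β t² / 2)` and `√p = exp (t² / 4)`. With
the Gaussian tail `Q = 1 - Φ`, the numerator of `Sep` is `≈ ε_p Q((1 - √r) t) ≈ exp (-δ t² / 2)`
for `δ = β + (1 - √r)²`, and the radicand is `≈ exp (-δ t² / 2) + exp (-t² / 2)`. Hence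
`√p · Sep` is, up to factors `exp (O(t))`, `exp ((1 - δ) t² / 4)` when `δ < 1` and at most
`exp ((1 - δ) t² / 2)` when `δ > 1`; and `δ < 1` iff `√r + √(1 - β) > 1` iff
`r > (1 - √(1 - β))²`. The Gaussian tail bounds `φ(x + 1) ≤ Q(x) - Q(x + 1)` (`x ≥ 0`) and
`Q(x) ≤ exp (-x² / 2)` (`x ≥ 1`) make this quantitative.
-/

noncomputable def gaussTail (x : ℝ) : ℝ := ∫ y in Ioi x, gaussPDF y

section Gaussian

lemma gaussPDF_eq_gaussianPDFReal : gaussPDF = ProbabilityTheory.gaussianPDFReal 0 1 := by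
  ext x
  simp [gaussPDF, ProbabilityTheory.gaussianPDFReal]

lemma gaussPDF_pos (x : ℝ) : 0 < gaussPDF x := by
  unfold gaussPDF
  positivity

lemma integrable_gaussPDF : Integrable gaussPDF :=
  gaussPDF_eq_gaussianPDFReal ▸ ProbabilityTheory.integrable_gaussianPDFReal 0 1

lemma gaussPDF_neg (x : ℝ) : gaussPDF (-x) = gaussPDF x := by
  simp [gaussPDF]

lemma gaussPDF_antitoneOn : AntitoneOn gaussPDF (Ici 0) := fun x hx _ _ hxy ↦ by
  have : 0 ≤ x := hx
  unfold gaussPDF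
  gcongr

lemma gaussPDF_le_exp (x : ℝ) : gaussPDF x ≤ exp (-x ^ 2 / 2) := by
  have : 1 ≤ √(2 * π) := one_le_sqrt.2 (by linarith [pi_gt_three])
  unfold gaussPDF
  exact mul_le_of_le_one_left (exp_pos _).le (inv_le_one_of_one_le₀ this)

lemma exp_div_four_le_gaussPDF (x : ℝ) : exp (-x ^ 2 / 2) / 4 ≤ gaussPDF x := by
  have : √(2 * π) ≤ 4 := (sqrt_le_left (by norm_num)).2 (by linarith [pi_lt_four])
  unfold gaussPDF
  rw [div_eq_inv_mul]
  gcongr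

lemma normCDF_add_gaussTail (x : ℝ) : normCDF x + gaussTail x = 1 := by
  rw [normCDF, gaussTail, intervalIntegral.integral_Iic_add_Ioi integrable_gaussPDF.integrableOn
    integrable_gaussPDF.integrableOn, gaussPDF_eq_gaussianPDFReal,
    ProbabilityTheory.integral_gaussianPDFReal_eq_one 0 one_ne_zero]

lemma normCDF_neg (x : ℝ) : normCDF (-x) = gaussTail x := by
  simp_rw [normCDF, gaussTail, ← integral_comp_neg_Ioi, gaussPDF_neg]

lemma psiBar_eq_gaussTail (τ t : ℝ) : psiBar τ t = gaussTail (t - τ) + gaussTail (t + τ) := by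
  rw [psiBar, ← normCDF_add_gaussTail (t - τ), show -t - τ = -(t + τ) by ring, normCDF_neg]
  ring

lemma gaussTail_nonneg (x : ℝ) : 0 ≤ gaussTail x :=
  setIntegral_nonneg measurableSet_Ioi fun y _ ↦ (gaussPDF_pos y).le

lemma gaussTail_antitone : Antitone gaussTail := fun _ _ hab ↦
  setIntegral_mono_set integrable_gaussPDF.integrableOn
    (ae_of_all _ fun y ↦ (gaussPDF_pos y).le) (ae_of_all _ (Ioi_subset_Ioi hab))

lemma gaussPDF_le_gaussTail_sub {a : ℝ} (ha : 0 ≤ a) :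
    gaussPDF (a + 1) ≤ gaussTail a - gaussTail (a + 1) := by
  rw [gaussTail, gaussTail,
    intervalIntegral.integral_Ioi_sub_Ioi integrable_gaussPDF.integrableOn (by linarith)]
  calc gaussPDF (a + 1) = ∫ _ in a..a + 1, gaussPDF (a + 1) := by simp
    _ ≤ ∫ y in a..a + 1, gaussPDF y :=
      intervalIntegral.integral_mono_on (by linarith) (by simp)
        integrable_gaussPDF.intervalIntegrable fun y hy ↦
          gaussPDF_antitoneOn (ha.trans hy.1) (by simp; linarith) hy.2

lemma gaussPDF_le_gaussTail {a : ℝ} (ha : 0 ≤ a) : gaussPDF (a + 1) ≤ gaussTail a := by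
  linarith [gaussPDF_le_gaussTail_sub ha, gaussTail_nonneg (a + 1)]

lemma hasDerivAt_neg_gaussPDF (y : ℝ) : HasDerivAt (fun z ↦ -gaussPDF z) (y * gaussPDF y) y := by
  have h : HasDerivAt (fun z : ℝ ↦ -z ^ 2 / 2) (-y) y :=
    ((hasDerivAt_pow 2 y).neg.div_const 2).congr_deriv (by push_cast; ring)
  refine ((h.exp).const_mul (√(2 * π))⁻¹).neg.congr_deriv ?_
  unfold gaussPDF
  ring

lemma tendsto_gaussPDF_atTop : Tendsto gaussPDF atTop (nhds 0) := by
  unfold gaussPDF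
  have h : Tendsto (fun x : ℝ ↦ -x ^ 2 / 2) atTop atBot :=
    (tendsto_neg_atTop_atBot.comp (tendsto_pow_atTop two_ne_zero)).atBot_div_const two_pos
  simpa using (tendsto_exp_atBot.comp h).const_mul (√(2 * π))⁻¹

/-- Mills' inequality `Q(x) ≤ φ(x)/x`, weakened to `x ≥ 1`. -/
lemma gaussTail_le_gaussPDF {x : ℝ} (hx : 1 ≤ x) : gaussTail x ≤ gaussPDF x := by
  have hderiv : ∀ y ∈ Ici x, HasDerivAt (fun z ↦ -gaussPDF z) (y * gaussPDF y) y :=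
    fun y _ ↦ hasDerivAt_neg_gaussPDF y
  have hpos : ∀ y ∈ Ioi x, 0 ≤ y * gaussPDF y := fun y hy ↦
    mul_nonneg (by linarith [hy.out]) (gaussPDF_pos y).le
  have hlim : Tendsto (fun z ↦ -gaussPDF z) atTop (nhds 0) := by
    simpa using tendsto_gaussPDF_atTop.neg
  calc gaussTail x ≤ ∫ y in Ioi x, y * gaussPDF y :=
        setIntegral_mono_on integrable_gaussPDF.integrableOn
          (integrableOn_Ioi_deriv_of_nonneg' hderiv hpos hlim) measurableSet_Ioi
          fun y hy ↦ le_mul_of_one_le_left (gaussPDF_pos y).le (hx.trans hy.out.le)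
    _ = gaussPDF x := by rw [integral_Ioi_of_hasDerivAt_of_nonneg' hderiv hpos hlim]; ring

lemma gaussTail_le_exp {x : ℝ} (hx : 1 ≤ x) : gaussTail x ≤ exp (-x ^ 2 / 2) :=
  (gaussTail_le_gaussPDF hx).trans (gaussPDF_le_exp x)

end Gaussian

section Separation

variable {ε τ t : ℝ}

lemma sepFn_eq_gaussTail (ε τ t : ℝ) :
    sepFn ε τ t = 2 * τ * (ε * (gaussTail (t - τ) - gaussTail (t + τ))) /
      √(ε * (gaussTail (t - τ) + gaussTail (t + τ)) + 2 * (1 - ε) * gaussTail t) := by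
  rw [sepFn, tprFn, fprFn, idrFn, psiBar_eq_gaussTail, psiBar_eq_gaussTail,
    show -t - τ = -(t + τ) by ring, normCDF_neg, sub_zero, add_zero]
  ring_nf

lemma sepFn_nonneg (hε : 0 ≤ ε) (hτ : 0 ≤ τ) : 0 ≤ sepFn ε τ t := by
  have := gaussTail_antitone (show t - τ ≤ t + τ by linarith)
  rw [sepFn_eq_gaussTail]
  exact div_nonneg (mul_nonneg (by positivity) (mul_nonneg hε (sub_nonneg.2 this))) (sqrt_nonneg _)

lemma le_sepFn {M : ℝ} (hε0 : 0 < ε) (hε1 : ε ≤ 1) (hτ : 1 ≤ τ) (ha : 1 ≤ t - τ)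
    (hM₁ : ε * exp (-(t - τ) ^ 2 / 2) ≤ M) (hM₂ : exp (-t ^ 2 / 2) ≤ M) :
    ε * exp (-(t - τ + 1) ^ 2 / 2) / (4 * √M) ≤ sepFn ε τ t := by
  rw [sepFn_eq_gaussTail]
  set D := ε * (gaussTail (t - τ) + gaussTail (t + τ)) + 2 * (1 - ε) * gaussTail t
  have hfar : gaussTail (t + τ) ≤ gaussTail (t - τ + 1) := gaussTail_antitone (by linarith)
  have hnum : ε * exp (-(t - τ + 1) ^ 2 / 2) / 2 ≤
      2 * τ * (ε * (gaussTail (t - τ) - gaussTail (t + τ))) := by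
    have := (exp_div_four_le_gaussPDF _).trans (gaussPDF_le_gaussTail_sub (by linarith : 0 ≤ t - τ))
    calc ε * exp (-(t - τ + 1) ^ 2 / 2) / 2 = 2 * 1 * (ε * (exp (-(t - τ + 1) ^ 2 / 2) / 4)) := by
          ring
      _ ≤ 2 * τ * (ε * (gaussTail (t - τ) - gaussTail (t + τ))) := by
          gcongr
          linarith
  have hD_pos : 0 < D := by
    have := (gaussPDF_pos _).trans_le (gaussPDF_le_gaussTail (by linarith : 0 ≤ t - τ))
    have := gaussTail_nonneg (t + τ)
    exact add_pos_of_pos_of_nonneg (by positivity)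
      (mul_nonneg (by linarith) (gaussTail_nonneg t))
  have hD : D ≤ 4 * M := by
    have hQa := mul_le_mul_of_nonneg_left (gaussTail_le_exp ha) hε0.le
    have hQb := mul_le_mul_of_nonneg_left
      (gaussTail_antitone (show t - τ ≤ t + τ by linarith)) hε0.le
    have hQt := gaussTail_le_exp (show 1 ≤ t by linarith)
    have := mul_le_of_le_one_left (gaussTail_nonneg t) (by linarith : 1 - ε ≤ 1)
    linarith
  have hsqrtD : √D ≤ 2 * √M := by
    rw [show 2 * √M = √(4 * M) by rw [sqrt_mul' _ (by linarith : 0 ≤ M)]; norm_num]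
    exact sqrt_le_sqrt hD
  calc ε * exp (-(t - τ + 1) ^ 2 / 2) / (4 * √M)
      = ε * exp (-(t - τ + 1) ^ 2 / 2) / 2 / (2 * √M) := by ring
    _ ≤ _ := div_le_div₀ ((by positivity : (0 : ℝ) ≤ _).trans hnum) hnum (sqrt_pos.2 hD_pos) hsqrtD

lemma sepFn_le (hε0 : 0 ≤ ε) (hε1 : ε ≤ 1 / 2) (hτ : 0 ≤ τ) (ha : 1 ≤ t - τ) :
    sepFn ε τ t ≤ 4 * τ * ε * exp (-(t - τ) ^ 2 / 2 + (t + 1) ^ 2 / 4) := by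
  rw [sepFn_eq_gaussTail]
  set D := ε * (gaussTail (t - τ) + gaussTail (t + τ)) + 2 * (1 - ε) * gaussTail t
  have hnum : 2 * τ * (ε * (gaussTail (t - τ) - gaussTail (t + τ))) ≤
      2 * τ * ε * exp (-(t - τ) ^ 2 / 2) := by
    have := gaussTail_le_exp ha
    have := gaussTail_nonneg (t + τ)
    have : 0 ≤ τ * ε := mul_nonneg hτ hε0
    nlinarith
  have hden : exp (-(t + 1) ^ 2 / 4) / 2 ≤ √D := by
    have hQ := (exp_div_four_le_gaussPDF (t + 1)).trans (gaussPDF_le_gaussTail (by linarith))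
    have hD : exp (-(t + 1) ^ 2 / 2) / 4 ≤ D := by
      have := gaussTail_nonneg (t - τ)
      have := gaussTail_nonneg (t + τ)
      have := mul_nonneg (by linarith : 0 ≤ 1 - 2 * ε) (gaussTail_nonneg t)
      nlinarith
    refine (le_sqrt (by positivity) ((by positivity : (0 : ℝ) ≤ _).trans hD)).2 ?_
    calc (exp (-(t + 1) ^ 2 / 4) / 2) ^ 2 = exp (-(t + 1) ^ 2 / 2) / 4 := by
          rw [div_pow, ← exp_nat_mul]; ring_nf
      _ ≤ D := hD
  calc 2 * τ * (ε * (gaussTail (t - τ) - gaussTail (t + τ))) / √D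
      ≤ 2 * τ * ε * exp (-(t - τ) ^ 2 / 2) / (exp (-(t + 1) ^ 2 / 4) / 2) :=
        div_le_div₀ (by positivity) hnum (by positivity) hden
    _ = 4 * τ * ε * exp (-(t - τ) ^ 2 / 2 + (t + 1) ^ 2 / 4) := by
      rw [exp_add, show (t + 1) ^ 2 / 4 = -(-(t + 1) ^ 2 / 4) by ring, exp_neg]
      field_simp
      ring

end Separation

lemma tendsto_quadratic_atTop {c : ℝ} (hc : 0 < c) (b d : ℝ) :
    Tendsto (fun t : ℝ ↦ c * t ^ 2 + b * t + d) atTop atTop := by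
  refine tendsto_atTop_mono (fun t ↦ ?_) <| tendsto_atTop_add_const_right _ (d - b ^ 2 / (2 * c)) <|
    (tendsto_pow_atTop two_ne_zero).const_mul_atTop (half_pos hc)
  have : 0 ≤ (c * t + b) ^ 2 / (2 * c) := by positivity
  have : (c * t + b) ^ 2 / (2 * c) = c / 2 * t ^ 2 + b * t + b ^ 2 / (2 * c) := by
    field_simp; ring
  linarith

lemma one_sub_sq_lt_sq_iff {u s : ℝ} (hu : u ≤ 1) (hs : 0 ≤ s) :
    (1 - u) ^ 2 < s ^ 2 ↔ 1 < u + s := by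
  rw [sq_lt_sq₀ (by linarith) hs]
  constructor <;> intro <;> linarith

lemma sq_lt_one_sub_sq_iff {u s : ℝ} (hu : u ≤ 1) (hs : 0 ≤ s) :
    s ^ 2 < (1 - u) ^ 2 ↔ u + s < 1 := by
  rw [sq_lt_sq₀ hs (by linarith)]
  constructor <;> intro <;> linarith

/-- `√p · Sep(t_p(1); ε_p, τ_p)` written in terms of `t = t_p(1)`, using `log p = t² / 2`. -/
noncomputable def arwBonferroniSep (β r t : ℝ) : ℝ :=
  exp (t ^ 2 / 4) * sepFn (exp (-(β * t ^ 2 / 2))) (√r * t) t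

section ARW

variable {β r : ℝ}

lemma sqrt_mul_sepFn_eq_arwBonferroniSep {p : ℕ} (hp : 0 < p) :
    √p * sepFn (epsP β p) (tauP r p) (tP 1 p) = arwBonferroniSep β r (tP 1 p) := by
  have hp' : (0 : ℝ) < p := Nat.cast_pos.2 hp
  have hL := log_natCast_nonneg p
  have ht : tP 1 p ^ 2 = 2 * log p := by rw [tP, sq_sqrt (by positivity), mul_one]
  have hε : epsP β p = exp (-(β * tP 1 p ^ 2 / 2)) := by
    rw [ht, epsP, rpow_def_of_pos hp']
    ring_nf
  have hτ : tauP r p = √r * tP 1 p := by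
    rw [tauP, tP, ← sqrt_mul' r (by positivity)]
    ring_nf
  have hp : √p = exp (tP 1 p ^ 2 / 4) := by
    rw [ht, show 2 * log p / 4 = log p / 2 by ring, exp_half, exp_log hp']
  rw [arwBonferroniSep, hε, hτ, hp]

lemma tendsto_tP_one : Tendsto (tP 1) atTop atTop :=
  tendsto_sqrt_atTop.comp <|
    (tendsto_log_atTop.comp tendsto_natCast_atTop_atTop).const_mul_atTop (by norm_num)

lemma tendsto_arwBonferroniSep_atTop (hβ : 0 ≤ β) (hr0 : 0 < r) (hr1 : r < 1)
    (hδ : β + (1 - √r) ^ 2 < 1) : Tendsto (arwBonferroniSep β r) atTop atTop := by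
  set s := √r
  set δ := β + (1 - s) ^ 2
  have hs0 : 0 < s := sqrt_pos.2 hr0
  have hs1 : s < 1 := (sqrt_lt' one_pos).2 (by simpa using hr1)
  have hq := tendsto_quadratic_atTop (by linarith : 0 < (1 - δ) / 4) (-(1 - s)) (-1 / 2)
  refine tendsto_atTop_mono' _ ?_ ((tendsto_exp_atTop.comp hq).atTop_div_const four_pos)
  filter_upwards [eventually_ge_atTop (1 / s), eventually_ge_atTop (1 / (1 - s))] with t ht₁ ht₂
  have hτ : 1 ≤ s * t := by rw [div_le_iff₀ hs0] at ht₁; linarith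
  have ha : 1 ≤ t - s * t := by rw [div_le_iff₀ (by linarith)] at ht₂; linarith
  have hM₁ : exp (-(β * t ^ 2 / 2)) * exp (-(t - s * t) ^ 2 / 2) ≤ exp (-(δ * t ^ 2 / 2)) := by
    rw [← exp_add]; exact le_of_eq (by congr 1; ring)
  have hM₂ : exp (-t ^ 2 / 2) ≤ exp (-(δ * t ^ 2 / 2)) := exp_le_exp.2 (by nlinarith)
  have key := le_sepFn (exp_pos _) (exp_le_one_iff.2 (by nlinarith)) hτ ha hM₁ hM₂
  calc exp ((1 - δ) / 4 * t ^ 2 + -(1 - s) * t + -1 / 2) / 4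
      = exp (t ^ 2 / 4) * (exp (-(β * t ^ 2 / 2)) * exp (-(t - s * t + 1) ^ 2 / 2) /
          (4 * √(exp (-(δ * t ^ 2 / 2))))) := by
        rw [← exp_half, show (1 - δ) / 4 * t ^ 2 + -(1 - s) * t + -1 / 2 =
          t ^ 2 / 4 + -(β * t ^ 2 / 2) + -(t - s * t + 1) ^ 2 / 2 - -(δ * t ^ 2 / 2) / 2 by ring,
          exp_sub, exp_add, exp_add]
        ring
    _ ≤ arwBonferroniSep β r t := mul_le_mul_of_nonneg_left key (exp_pos _).le

lemma tendsto_arwBonferroniSep_zero (hβ : 0 < β) (hr1 : r < 1)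
    (hδ : 1 < β + (1 - √r) ^ 2) : Tendsto (arwBonferroniSep β r) atTop (nhds 0) := by
  set s := √r
  set δ := β + (1 - s) ^ 2
  have hs0 : 0 ≤ s := sqrt_nonneg r
  have hs1 : s < 1 := (sqrt_lt' one_pos).2 (by simpa using hr1)
  have hq := tendsto_quadratic_atTop (by linarith : 0 < (δ - 1) / 2) (-(3 / 2)) (-(1 / 4))
  have hbound := ((tendsto_exp_atBot.comp (tendsto_neg_atTop_atBot.comp hq)).const_mul 4)
  rw [mul_zero] at hbound
  have hε : Tendsto (fun t : ℝ ↦ exp (-(β * t ^ 2 / 2))) atTop (nhds 0) :=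
    tendsto_exp_atBot.comp <| tendsto_neg_atTop_atBot.comp <|
      ((tendsto_pow_atTop two_ne_zero).const_mul_atTop hβ).atTop_div_const two_pos
  refine squeeze_zero' ?_ ?_ hbound
  · filter_upwards [eventually_ge_atTop 0] with t ht
    exact mul_nonneg (exp_pos _).le (sepFn_nonneg (exp_pos _).le (by positivity))
  filter_upwards [eventually_ge_atTop (1 / (1 - s)), hε.eventually (ge_mem_nhds one_half_pos)]
    with t ht hεt
  have ha : 1 ≤ t - s * t := by rw [div_le_iff₀ (by linarith)] at ht; linarith
  have ht0 : 0 ≤ t := by nlinarith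
  have key := sepFn_le (exp_pos _).le hεt (by positivity) ha
  calc arwBonferroniSep β r t
      ≤ exp (t ^ 2 / 4) * (4 * (s * t) * exp (-(β * t ^ 2 / 2)) *
          exp (-(t - s * t) ^ 2 / 2 + (t + 1) ^ 2 / 4)) :=
        mul_le_mul_of_nonneg_left key (exp_pos _).le
    _ = 4 * (s * t) * exp (-((δ - 1) / 2 * t ^ 2 + -(3 / 2) * t + -(1 / 4)) - t) := by
        rw [show -((δ - 1) / 2 * t ^ 2 + -(3 / 2) * t + -(1 / 4)) - t = t ^ 2 / 4 +
          -(β * t ^ 2 / 2) + (-(t - s * t) ^ 2 / 2 + (t + 1) ^ 2 / 4) by ring]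
        simp only [exp_add]
        ring
    _ ≤ 4 * exp t * exp (-((δ - 1) / 2 * t ^ 2 + -(3 / 2) * t + -(1 / 4)) - t) := by
        gcongr
        nlinarith [add_one_le_exp t]
    _ = 4 * exp (-((δ - 1) / 2 * t ^ 2 + -(3 / 2) * t + -(1 / 4))) := by
        rw [mul_assoc, ← exp_add, add_sub_cancel]

end ARW

/-- Phase diagram for Bonferroni thresholding t_p(1) = √(2 log p). -/
theorem stmt8 (β r : ℝ) (hβ1 : 0 < β) (hβ2 : β < 1) (hr1 : 0 < r) (hr2 : r < 1) :
    ((1 - Real.sqrt (1 - β)) ^ 2 < r →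
      Filter.Tendsto (fun p : ℕ => Real.sqrt p * sepFn (epsP β p) (tauP r p) (tP 1 p))
        Filter.atTop Filter.atTop) ∧
    (r < (1 - Real.sqrt (1 - β)) ^ 2 →
      Filter.Tendsto (fun p : ℕ => Real.sqrt p * sepFn (epsP β p) (tauP r p) (tP 1 p))
        Filter.atTop (nhds 0)) := by
  have hu : √(1 - β) ^ 2 = 1 - β := sq_sqrt (by linarith)
  have hu1 : √(1 - β) ≤ 1 := sqrt_le_one.2 (by linarith)
  have hs : √r ^ 2 = r := sq_sqrt hr1.le
  have hs1 : √r ≤ 1 := sqrt_le_one.2 hr2.le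
  have hred : (fun p : ℕ ↦ √p * sepFn (epsP β p) (tauP r p) (tP 1 p)) =ᶠ[atTop]
      arwBonferroniSep β r ∘ tP 1 :=
    (eventually_gt_atTop 0).mono fun p hp ↦ sqrt_mul_sepFn_eq_arwBonferroniSep hp
  refine ⟨fun h ↦ ?_, fun h ↦ ?_⟩
  · rw [← hs, one_sub_sq_lt_sq_iff hu1 (sqrt_nonneg r), add_comm,
      ← one_sub_sq_lt_sq_iff hs1 (sqrt_nonneg _), hu] at h
    exact ((tendsto_arwBonferroniSep_atTop hβ1.le hr1 hr2 (by linarith)).comp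
      tendsto_tP_one).congr' hred.symm
  · rw [← hs, sq_lt_one_sub_sq_iff hu1 (sqrt_nonneg r), add_comm,
      ← sq_lt_one_sub_sq_iff hs1 (sqrt_nonneg _), hu] at h
    exact ((tendsto_arwBonferroniSep_zero hβ1 hr2 (by linarith)).comp
      tendsto_tP_one).congr' hred.symm
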